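/- arXiv:1311.6560 — 4 statements merged into one kernel-verified Lean document; each statement's English description precedes it below -/
import Mathlib

section
/- Let P be a poset with least element 0 and Z(P)^× ≠ ∅. Then the diameter of the reduced zero-divisor graph Γ_E(P) equals 1 if and only if ann(x) = ann(y) for all x, y ∈ Z(P)^× with L(x,y) ≠ {0}. -/
/-- `L(x,y) = {z : z ≤ x ∧ z ≤ y}`, where the least element `0` of the poset is `⊥`. -/
def LSet (P : Type*) [PartialOrder P] [OrderBot P] (x y : P) : Set P := {z | z ≤ x ∧ z ≤ y}

theorem LSet_comm (P : Type*) [PartialOrder P] [OrderBot P] (x y : P) :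
    LSet P x y = LSet P y x := by
  ext z; exact ⟨fun h => ⟨h.2, h.1⟩, fun h => ⟨h.2, h.1⟩⟩

/-- The annihilator of `x`: `ann(x) = {y : L(x,y) = {0}}`. -/
def ann (P : Type*) [PartialOrder P] [OrderBot P] (x : P) : Set P := {y | LSet P x y = {⊥}}

theorem mem_ann_comm (P : Type*) [PartialOrder P] [OrderBot P] (x y : P) :
    y ∈ ann P x ↔ x ∈ ann P y := by
  simp only [ann, Set.mem_setOf_eq, LSet_comm P x y]

/-- The set `Z(P)^× = Z(P) \ {0}` of nonzero zero-divisors of `P`. -/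
def ZDivX (P : Type*) [PartialOrder P] [OrderBot P] : Set P :=
  {x | x ≠ ⊥ ∧ ∃ y : P, y ≠ ⊥ ∧ LSet P x y = {⊥}}

/-- The zero-divisor graph `Γ(P)` on `Z(P)^×`. -/
def zdGraph (P : Type*) [PartialOrder P] [OrderBot P] : SimpleGraph (ZDivX P) where
  Adj a b := (a : P) ≠ (b : P) ∧ LSet P a b = {⊥}
  symm := by
    constructor
    rintro a b ⟨h1, h2⟩
    exact ⟨fun h => h1 h.symm, by rw [LSet_comm]; exact h2⟩
  loopless := by constructor; rintro a ⟨h1, _⟩; exact h1 rfl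

/-- The equivalence `x ∼ y ↔ ann(x) = ann(y)` on `Z(P)^×`. -/
def annSetoid (P : Type*) [PartialOrder P] [OrderBot P] : Setoid (ZDivX P) where
  r a b := ann P a = ann P b
  iseqv := ⟨fun _ => rfl, Eq.symm, Eq.trans⟩

/-- The reduced zero-divisor graph `Γ_E(P)`, on equivalence classes of `Z(P)^×`. -/
def redGraph (P : Type*) [PartialOrder P] [OrderBot P] :
    SimpleGraph (Quotient (annSetoid P)) where
  Adj := Quotient.lift₂ (fun a b => LSet P (a : P) (b : P) = {⊥}) (by
    intro a b a' b' ha hb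
    have ha' : ann P (a : P) = ann P (a' : P) := ha
    have hb' : ann P (b : P) = ann P (b' : P) := hb
    apply propext
    constructor
    · intro h
      have h1 : (b : P) ∈ ann P (a : P) := h
      rw [ha', mem_ann_comm, hb', mem_ann_comm] at h1
      exact h1
    · intro h
      have h1 : (b' : P) ∈ ann P (a' : P) := h
      rw [← ha', mem_ann_comm, ← hb', mem_ann_comm] at h1
      exact h1)
  symm := by
    constructor
    intro x y
    refine Quotient.inductionOn₂ x y ?_
    intro a b h
    have h' : LSet P (a : P) (b : P) = {⊥} := h
    show LSet P (b : P) (a : P) = {⊥}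
    rw [LSet_comm]; exact h'
  loopless := by
    constructor
    intro x
    refine Quotient.inductionOn x ?_
    intro a h
    have h' : LSet P (a : P) (a : P) = {⊥} := h
    have hm : (a : P) ∈ LSet P (a : P) (a : P) := ⟨le_refl _, le_refl _⟩
    rw [h'] at hm
    exact a.2.1 hm

/-!
The graph `Γ_E(P)` has at least two vertices: a zero-divisor `x` and a nonzero `y` with
`L(x,y) = {0}` lie in different classes, since `y ∈ ann(x)` while `y ∉ ann(y)`. A simple graph
on at least two vertices has diameter `1` exactly when it is complete, and completeness of
`Γ_E(P)` says that distinct classes always meet only in `0`, which is the contrapositive of the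
stated condition.
-/

section ReducedZeroDivisorGraph

variable {P : Type*} [PartialOrder P] [OrderBot P]

theorem notMem_ann_self {x : P} (hx : x ≠ ⊥) : x ∉ ann P x := by
  intro hxx
  have hmem : x ∈ LSet P x x := ⟨le_rfl, le_rfl⟩
  rw [hxx] at hmem
  exact hx hmem

theorem annSetoid_mk_eq_mk_iff {u v : ZDivX P} :
    (⟦u⟧ : Quotient (annSetoid P)) = ⟦v⟧ ↔ ann P u = ann P v :=
  Quotient.eq

theorem redGraph_adj_mk {u v : ZDivX P} :
    (redGraph P).Adj ⟦u⟧ ⟦v⟧ ↔ LSet P u v = {⊥} :=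
  Iff.rfl

theorem nontrivial_quotient_annSetoid (hZ : (ZDivX P).Nonempty) :
    Nontrivial (Quotient (annSetoid P)) := by
  obtain ⟨x, hx⟩ := hZ
  obtain ⟨hx_ne, y, hy_ne, hxy⟩ := hx
  have hy : y ∈ ZDivX P := ⟨hy_ne, x, hx_ne, by rw [LSet_comm]; exact hxy⟩
  refine ⟨⟦⟨x, hx_ne, y, hy_ne, hxy⟩⟧, ⟦⟨y, hy⟩⟧, fun h => ?_⟩
  have hann : ann P x = ann P y := annSetoid_mk_eq_mk_iff.mp h
  have hy_ann_x : y ∈ ann P x := hxy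
  exact notMem_ann_self hy_ne (hann ▸ hy_ann_x)

theorem redGraph_eq_top_iff :
    redGraph P = ⊤ ↔
      ∀ x y : ZDivX P, LSet P (x : P) (y : P) ≠ {⊥} → ann P (x : P) = ann P (y : P) := by
  rw [SimpleGraph.eq_top_iff_forall_ne_adj]
  constructor
  · intro hcomplete x y hxy
    by_contra hne
    exact hxy (redGraph_adj_mk.mp (hcomplete ⟦x⟧ ⟦y⟧ (mt annSetoid_mk_eq_mk_iff.mp hne)))
  · intro hcond q q'
    refine Quotient.inductionOn₂ q q' fun x y hne => redGraph_adj_mk.mpr ?_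
    by_contra hxy
    exact hne (annSetoid_mk_eq_mk_iff.mpr (hcond x y hxy))

end ReducedZeroDivisorGraph

/-- `diam Γ_E(P) = 1` iff `ann(x) = ann(y)` for all `x, y ∈ Z(P)^×` with `L(x,y) ≠ {0}`. -/
theorem stmt2 (P : Type*) [PartialOrder P] [OrderBot P] (hZ : (ZDivX P).Nonempty) :
    (redGraph P).ediam = 1 ↔
      ∀ x y : ZDivX P, LSet P (x : P) (y : P) ≠ {⊥} → ann P (x : P) = ann P (y : P) := by
  have := nontrivial_quotient_annSetoid hZ
  rw [SimpleGraph.ediam_eq_one, redGraph_eq_top_iff]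
end

section
/- There is no poset P (with least element 0 and Z(P)^× ≠ ∅) for which the reduced zero-divisor graph Γ_E(P) is a cycle graph with at least four vertices; that is, for every n ≥ 4, Γ_E(P) is not isomorphic to the cycle graph C_n. -/
open Function SimpleGraph

namespace SimpleGraph

variable {V W : Type*} {G : SimpleGraph V} {H : SimpleGraph W}

def NonAdjNeighborSetsBounded (G : SimpleGraph V) : Prop :=
  ∀ ⦃u v : V⦄, ¬ G.Adj u v → ∃ w, G.neighborSet u ∪ G.neighborSet v ⊆ G.neighborSet w

theorem Iso.injective_neighborSet (e : G ≃g H) (hG : Injective G.neighborSet) :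
    Injective H.neighborSet := by
  intro u v huv
  apply e.symm.injective
  apply hG
  rw [← e.symm.image_neighborSet, ← e.symm.image_neighborSet, huv]

theorem Iso.nonAdjNeighborSetsBounded (e : G ≃g H) (hG : G.NonAdjNeighborSetsBounded) :
    H.NonAdjNeighborSetsBounded := by
  intro u v huv
  obtain ⟨w, hw⟩ := hG (u := e.symm u) (v := e.symm v) (by rwa [e.symm.map_adj_iff])
  refine ⟨e w, ?_⟩
  have := Set.image_mono (f := e) hw
  rwa [Set.image_union, e.image_neighborSet, e.image_neighborSet, e.image_neighborSet,
    e.apply_symm_apply, e.apply_symm_apply] at this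

theorem not_injective_neighborSet_cycleGraph_four : ¬ Injective (cycleGraph 4).neighborSet := by
  intro h
  have : (0 : Fin 4) = 2 := h (by ext x; revert x; decide)
  exact absurd this (by decide)

theorem not_nonAdjNeighborSetsBounded_cycleGraph (m : ℕ) :
    ¬ (cycleGraph (m + 5)).NonAdjNeighborSetsBounded := by
  intro h
  have hval₂ : ((2 : Fin (m + 5)) : ℕ) = 2 := rfl
  have hval₃ : ((3 : Fin (m + 5)) : ℕ) = 3 := rfl
  obtain ⟨w, hw⟩ := h (u := 0) (v := 2) (by
    rw [← mem_neighborSet, cycleGraph_neighborSet, zero_sub, zero_add]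
    simp only [Set.mem_insert_iff, Set.mem_singleton_iff, Fin.ext_iff, Fin.coe_neg_one,
      Fin.val_one, hval₂]
    omega)
  have hsub : ({-1, 1, 3} : Set (Fin (m + 5))) ⊆ (cycleGraph (m + 5)).neighborSet w := by
    rintro x (rfl | rfl | rfl) <;> apply hw <;>
      simp only [Set.mem_union, mem_neighborSet, cycleGraph_adj]
    · simp
    · simp
    · right; right
      rw [sub_eq_iff_eq_add']
      rfl
  have hcard : ({-1, 1, 3} : Set (Fin (m + 5))).ncard = 3 := by
    rw [Set.ncard_eq_three]
    refine ⟨-1, 1, 3, ?_, ?_, ?_, rfl⟩ <;>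
      simp only [ne_eq, Fin.ext_iff, Fin.coe_neg_one, Fin.val_one, hval₃] <;> omega
  have hle := Set.ncard_le_ncard hsub
  rw [cycleGraph_neighborSet] at hle
  have := Set.ncard_insert_le (w - 1) {w + 1}
  rw [Set.ncard_singleton] at this
  omega

end SimpleGraph

section ZeroDivisorGraph

variable {P : Type*} [PartialOrder P] [OrderBot P]

theorem LSet_eq_singleton_bot_iff {x y : P} :
    LSet P x y = {⊥} ↔ ∀ z, z ≤ x → z ≤ y → z = ⊥ := by
  simp only [Set.eq_singleton_iff_unique_mem, LSet, Set.mem_ofPred_eq, bot_le, and_self,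
    true_and, and_imp]

theorem bot_mem_ann (x : P) : ⊥ ∈ ann P x :=
  LSet_eq_singleton_bot_iff.2 fun _ _ hz => le_bot_iff.1 hz

theorem ann_antitone : Antitone (ann P) := fun _ _ hzx _ hy =>
  LSet_eq_singleton_bot_iff.2 fun w hwz hwy =>
    LSet_eq_singleton_bot_iff.1 hy w (hwz.trans hzx) hwy

theorem mem_ZDivX_of_le {x z : P} (hx : x ∈ ZDivX P) (hz : z ≠ ⊥) (hzx : z ≤ x) :
    z ∈ ZDivX P := by
  obtain ⟨-, y, hy, hxy⟩ := hx
  exact ⟨hz, y, hy, ann_antitone hzx hxy⟩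

theorem redGraph_neighborSet_mk_subset_iff {a b : ZDivX P} :
    (redGraph P).neighborSet (Quotient.mk _ a) ⊆ (redGraph P).neighborSet (Quotient.mk _ b) ↔
      ann P a ⊆ ann P b := by
  constructor
  · intro h y hy
    by_cases hy0 : y = ⊥
    · exact hy0 ▸ bot_mem_ann _
    · have hyZ : y ∈ ZDivX P := ⟨hy0, a, a.2.1, (mem_ann_comm P _ _).1 hy⟩
      exact h (a := Quotient.mk _ ⟨y, hyZ⟩) hy
  · intro h v
    induction v using Quotient.inductionOn with
    | h y => exact fun hy => h hy

theorem redGraph_injective_neighborSet : Injective (redGraph P).neighborSet := by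
  intro u v huv
  induction u using Quotient.inductionOn with | h a => ?_
  induction v using Quotient.inductionOn with | h b => ?_
  exact Quotient.sound <| (redGraph_neighborSet_mk_subset_iff.1 huv.le).antisymm
    (redGraph_neighborSet_mk_subset_iff.1 huv.ge)

theorem redGraph_nonAdjNeighborSetsBounded : (redGraph P).NonAdjNeighborSetsBounded := by
  intro u v huv
  induction u using Quotient.inductionOn with | h a => ?_
  induction v using Quotient.inductionOn with | h b => ?_
  obtain ⟨z, hza, hzb, hz⟩ : ∃ z : P, z ≤ a ∧ z ≤ b ∧ z ≠ ⊥ := by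
    by_contra! hc
    exact huv (LSet_eq_singleton_bot_iff.2 hc)
  let c : ZDivX P := ⟨z, mem_ZDivX_of_le a.2 hz hza⟩
  exact ⟨Quotient.mk _ c, Set.union_subset
    (redGraph_neighborSet_mk_subset_iff.2 (ann_antitone hza))
    (redGraph_neighborSet_mk_subset_iff.2 (ann_antitone hzb))⟩

end ZeroDivisorGraph

theorem stmt4_general (P : Type*) [PartialOrder P] [OrderBot P]
    (n : ℕ) (hn : 4 ≤ n) :
    ¬ Nonempty (redGraph P ≃g SimpleGraph.cycleGraph n) := by
  rintro ⟨e⟩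
  obtain ⟨m, rfl⟩ := Nat.exists_eq_add_of_le' hn
  obtain _ | m := m
  · exact not_injective_neighborSet_cycleGraph_four
      (e.injective_neighborSet redGraph_injective_neighborSet)
  · exact not_nonAdjNeighborSetsBounded_cycleGraph m
      (e.nonAdjNeighborSetsBounded redGraph_nonAdjNeighborSetsBounded)

/-- There is no poset `P` for which `Γ_E(P)` is a cycle graph with at least four vertices. -/
theorem stmt4 (P : Type*) [PartialOrder P] [OrderBot P] (hZ : (ZDivX P).Nonempty)
    (n : ℕ) (hn : 4 ≤ n) :
    ¬ Nonempty (redGraph P ≃g SimpleGraph.cycleGraph n) :=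
  stmt4_general P n hn
end

section
/- Let P be a poset with least element 0 and Z(P)^× ≠ ∅. If P satisfies the ascending chain condition for annihilators, then for each x ∈ Z(P)^× there exists z ∈ P with ann(z) an annihilator prime ideal of P such that ann(x) ⊄ ann(z). -/
/-- `I` is an ideal of the poset `P`: a nonempty downward-closed subset. -/
def IsIdeal (P : Type*) [PartialOrder P] [OrderBot P] (I : Set P) : Prop :=
  I.Nonempty ∧ ∀ x ∈ I, ∀ y : P, y ≤ x → y ∈ I

/-- `I` is a prime ideal of the poset `P`: a proper ideal such that
`L(x,y) ⊆ I` implies `x ∈ I` or `y ∈ I`. -/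
def IsPrimeIdeal (P : Type*) [PartialOrder P] [OrderBot P] (I : Set P) : Prop :=
  IsIdeal P I ∧ I ≠ Set.univ ∧ ∀ x y : P, LSet P x y ⊆ I → x ∈ I ∨ y ∈ I

/-- The family `𝔄 = {ann(x) : x ∈ P \ {0}}`. -/
def AnnFam (P : Type*) [PartialOrder P] [OrderBot P] : Set (Set P) :=
  {I | ∃ x : P, x ≠ ⊥ ∧ ann P x = I}

/-- `Ann(P)`, the set of annihilator prime ideals of `P`. -/
def AnnPrimes (P : Type*) [PartialOrder P] [OrderBot P] : Set (Set P) :=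
  {I | IsPrimeIdeal P I ∧ ∃ x : P, ann P x = I}

/-- `P` satisfies the ACC for annihilators: every nonempty subfamily of `𝔄` has a
maximal element. -/
def ACCAnn (P : Type*) [PartialOrder P] [OrderBot P] : Prop :=
  ∀ S : Set (Set P), S ⊆ AnnFam P → S.Nonempty → ∃ I ∈ S, ∀ J ∈ S, I ⊆ J → I = J

/-!
A maximal member `ann(z)` of `𝔄` is prime: if `a, b ∉ ann(z)`, pick `0 ≠ w ≤ z, a`; then
`ann(z) ⊆ ann(w)`, so the two are equal, and every `v ≤ w, b` lies in `L(a,b) ⊆ ann(w)`,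
whence `v = 0` and `b ∈ ann(z)`. For `x ∈ Z(P)^×` with `L(x,y) = {0}`, the ACC puts `ann(y)`
inside such a maximal `ann(z)`; then `z ∈ ann(x)` but `z ∉ ann(z)`.
-/

section Annihilator

variable (P : Type*) [PartialOrder P] [OrderBot P]

theorem mem_ann_iff {x y : P} : y ∈ ann P x ↔ ∀ w, w ≤ x → w ≤ y → w = ⊥ := by
  refine ⟨fun h w hwx hwy => (h.subset ⟨hwx, hwy⟩ : w ∈ ({⊥} : Set P)), fun h => ?_⟩
  exact Set.eq_singleton_iff_unique_mem.mpr ⟨⟨bot_le, bot_le⟩, fun w hw => h w hw.1 hw.2⟩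

theorem ann_anti {w z : P} (hwz : w ≤ z) : ann P z ⊆ ann P w := fun _ hu =>
  (mem_ann_iff P).mpr fun v hvw hvu => (mem_ann_iff P).mp hu v (hvw.trans hwz) hvu

theorem self_notMem_ann {z : P} (hz : z ≠ ⊥) : z ∉ ann P z := fun h =>
  hz ((mem_ann_iff P).mp h z le_rfl le_rfl)

theorem ann_isIdeal (z : P) : IsIdeal P (ann P z) :=
  ⟨⟨⊥, (mem_ann_iff P).mpr fun _ _ hw => le_bot_iff.mp hw⟩,
    fun _ ha _ hba => (mem_ann_iff P).mpr fun w hwz hwb =>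
      (mem_ann_iff P).mp ha w hwz (hwb.trans hba)⟩

def IsMaximalAnn (z : P) : Prop :=
  z ≠ ⊥ ∧ ∀ w, w ≠ ⊥ → ann P z ⊆ ann P w → ann P z = ann P w

theorem exists_isMaximalAnn_superset (hacc : ACCAnn P) {y : P} (hy : y ≠ ⊥) :
    ∃ z, IsMaximalAnn P z ∧ ann P y ⊆ ann P z := by
  obtain ⟨_, ⟨z, hz, hyz, rfl⟩, hmax⟩ :=
    hacc {I | ∃ w, w ≠ ⊥ ∧ ann P y ⊆ ann P w ∧ ann P w = I}
      (fun _ ⟨w, hw, _, hwI⟩ => ⟨w, hw, hwI⟩) ⟨ann P y, y, hy, subset_rfl, rfl⟩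
  exact ⟨z, ⟨hz, fun w hw hzw => hmax _ ⟨w, hw, hyz.trans hzw, rfl⟩ hzw⟩, hyz⟩

theorem IsMaximalAnn.isPrimeIdeal {z : P} (hz : IsMaximalAnn P z) : IsPrimeIdeal P (ann P z) := by
  refine ⟨ann_isIdeal P z, fun huniv => self_notMem_ann P hz.1 (huniv ▸ Set.mem_univ z), ?_⟩
  intro a b hab
  by_contra! hcon
  obtain ⟨w, hwz, hwa, hw⟩ : ∃ w, w ≤ z ∧ w ≤ a ∧ w ≠ ⊥ := by
    simpa [mem_ann_iff] using hcon.1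
  have heq : ann P z = ann P w := hz.2 w hw (ann_anti P hwz)
  refine hcon.2 (heq ▸ (mem_ann_iff P).mpr fun v hvw hvb => ?_)
  have hv : v ∈ ann P w := heq ▸ hab ⟨hvw.trans hwa, hvb⟩
  exact (mem_ann_iff P).mp hv v hvw le_rfl

end Annihilator

theorem stmt13_general (P : Type*) [PartialOrder P] [OrderBot P]
    (hacc : ACCAnn P) (x : P) (hx : x ∈ ZDivX P) :
    ∃ z : P, IsPrimeIdeal P (ann P z) ∧ ¬ ann P x ⊆ ann P z := by
  obtain ⟨-, y, hy, hxy⟩ := hx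
  obtain ⟨z, hz, hyz⟩ := exists_isMaximalAnn_superset P hacc hy
  have hxz : x ∈ ann P z := hyz ((mem_ann_comm P x y).mp hxy)
  exact ⟨z, hz.isPrimeIdeal, fun h => self_notMem_ann P hz.1 (h ((mem_ann_comm P x z).mpr hxz))⟩

/-- If `P` satisfies the ACC for annihilators, then for each `x ∈ Z(P)^×` there is an
annihilator prime ideal `ann(z)` with `ann(x) ⊄ ann(z)`. -/
theorem stmt13 (P : Type*) [PartialOrder P] [OrderBot P] (hZ : (ZDivX P).Nonempty)
    (hacc : ACCAnn P) (x : P) (hx : x ∈ ZDivX P) :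
    ∃ z : P, IsPrimeIdeal P (ann P z) ∧ ¬ ann P x ⊆ ann P z :=
  stmt13_general P hacc x hx
end

section
/- Let P be a poset with least element 0 and Z(P)^× ≠ ∅. Then Ann(P) is a clique of the reduced zero-divisor graph Γ_E(P); that is, if x, y ∈ Z(P)^× are such that ann(x) and ann(y) are distinct annihilator prime ideals of P, then L(x,y) = {0}, so [x] and [y] are adjacent in Γ_E(P). -/
section AnnihilatorPrimes

variable {P : Type*} [PartialOrder P] [OrderBot P]

theorem IsIdeal.bot_mem {I : Set P} (hI : IsIdeal P I) : (⊥ : P) ∈ I :=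
  let ⟨a, ha⟩ := hI.1
  hI.2 a ha ⊥ bot_le

/-- Every element of `ann(a)` meets `a` only in `0 ∈ I`, so primality puts it in `I`. -/
theorem IsPrimeIdeal.ann_subset_of_notMem {I : Set P} (hI : IsPrimeIdeal P I) {a : P}
    (ha : a ∉ I) : ann P a ⊆ I := by
  intro w hw
  have hL : LSet P a w ⊆ I := by
    rw [show LSet P a w = {⊥} from hw, Set.singleton_subset_iff]
    exact hI.1.bot_mem
  exact (hI.2.2 a w hL).resolve_left ha

theorem mem_ann_of_isPrimeIdeal_of_ne {x y : P} (hx : IsPrimeIdeal P (ann P x))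
    (hy : IsPrimeIdeal P (ann P y)) (hne : ann P x ≠ ann P y) : y ∈ ann P x := by
  by_contra hyx
  have hxy : x ∉ ann P y := fun h => hyx ((mem_ann_comm P y x).mp h)
  exact hne ((hy.ann_subset_of_notMem hxy).antisymm (hx.ann_subset_of_notMem hyx))

end AnnihilatorPrimes

theorem stmt14_general (P : Type*) [PartialOrder P] [OrderBot P]
    (x y : ZDivX P) (hx : IsPrimeIdeal P (ann P (x : P)))
    (hy : IsPrimeIdeal P (ann P (y : P)))
    (hne : ann P (x : P) ≠ ann P (y : P)) :
    LSet P (x : P) (y : P) = {⊥} ∧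
      (redGraph P).Adj (Quotient.mk (annSetoid P) x) (Quotient.mk (annSetoid P) y) := by
  have hL : LSet P (x : P) (y : P) = {⊥} := mem_ann_of_isPrimeIdeal_of_ne hx hy hne
  exact ⟨hL, hL⟩

/-- `Ann(P)` is a clique of `Γ_E(P)`: if `ann(x)` and `ann(y)` are distinct annihilator
prime ideals (`x, y ∈ Z(P)^×`), then `L(x,y) = {0}`, i.e. `[x]` and `[y]` are adjacent. -/
theorem stmt14 (P : Type*) [PartialOrder P] [OrderBot P] (hZ : (ZDivX P).Nonempty)
    (x y : ZDivX P) (hx : IsPrimeIdeal P (ann P (x : P)))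
    (hy : IsPrimeIdeal P (ann P (y : P)))
    (hne : ann P (x : P) ≠ ann P (y : P)) :
    LSet P (x : P) (y : P) = {⊥} ∧
      (redGraph P).Adj (Quotient.mk (annSetoid P) x) (Quotient.mk (annSetoid P) y) :=
  stmt14_general P x y hx hy hne
end
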